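/- arXiv:1505.05600 — 3 statements merged into one kernel-verified Lean document; each statement's English description precedes it below -/
import Mathlib

section
/- Let H be a separable complex Hilbert space and A a non-negative injective self-adjoint operator on H. If g : [0,∞) → ℝ is of bounded variation and G(t) = ∫₀ᵗ g(s) ds, then for every u ∈ H, the time averages (1/T) ∫₀ᵀ g(t) exp(i G(t) A^{1/2}) u dt converge to 0 in norm as T → ∞. -/
/-!
For `v = S w` in the dense set, `g t • I • U (G t) v` is the derivative of `t ↦ U (G t) w` off the
countably many discontinuities of `g`, so `‖∫₀ᵀ g t • U (G t) v dt‖ ≤ 2‖w‖` and the averages are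
`O(1/T)`. The averaging maps are uniformly `sup |g|`-Lipschitz, so convergence to `0` passes from
the dense set to all of `H`.
-/

open MeasureTheory Filter Topology Set
open scoped NNReal

lemma BoundedVariationOn.exists_abs_le {α : Type*} [LinearOrder α] {f : α → ℝ} {s : Set α}
    (hf : BoundedVariationOn f s) : ∃ M, ∀ x ∈ s, |f x| ≤ M := by
  rcases s.eq_empty_or_nonempty with rfl | ⟨a, ha⟩
  · exact ⟨0, by simp⟩
  refine ⟨|f a| + (eVariationOn f s).toReal, fun x hx => ?_⟩
  have hxa := hf.dist_le hx ha
  rw [Real.dist_eq] at hxa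
  linarith [abs_sub_abs_le_abs_sub (f x) (f a)]

lemma BoundedVariationOn.intervalIntegrable {f : ℝ → ℝ} {a b : ℝ}
    (hf : BoundedVariationOn f (uIcc a b)) : IntervalIntegrable f volume a b := by
  obtain ⟨p, q, hp, hq, rfl⟩ := hf.locallyBoundedVariationOn.exists_monotoneOn_sub_monotoneOn
  exact hp.intervalIntegrable.sub hq.intervalIntegrable

lemma LocallyBoundedVariationOn.countable_not_continuousWithinAt {α : Type*} [LinearOrder α]
    [TopologicalSpace α] [OrderTopology α] [SecondCountableTopology α] {f : α → ℝ} {s : Set α}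
    (hf : LocallyBoundedVariationOn f s) : {x ∈ s | ¬ContinuousWithinAt f s x}.Countable := by
  obtain ⟨p, q, hp, hq, rfl⟩ := hf.exists_monotoneOn_sub_monotoneOn
  refine (hp.countable_not_continuousWithinAt.union hq.countable_not_continuousWithinAt).mono ?_
  rintro x ⟨hxs, hx⟩
  by_contra hpq
  simp only [mem_union, mem_ofPred_eq, hxs, true_and, not_or, not_not] at hpq
  exact hx (hpq.1.sub hpq.2)

lemma hasDerivAt_integral_of_mem_Ioo {E : Type*} [NormedAddCommGroup E] [NormedSpace ℝ E]
    [CompleteSpace E] {f : ℝ → E} {a b t : ℝ} (hf : IntervalIntegrable f volume a b)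
    (ht : t ∈ Ioo a b) (hft : ContinuousAt f t) :
    HasDerivAt (fun x => ∫ s in a..x, f s) (f t) t :=
  intervalIntegral.integral_hasDerivAt_right
    (hf.mono_set (uIcc_subset_uIcc_left (Icc_subset_uIcc (Ioo_subset_Icc_self ht))))
    ⟨Ioo a b, Ioo_mem_nhds ht.1 ht.2, hf.1.aestronglyMeasurable.mono_set Ioo_subset_Ioc_self⟩ hft

lemma tendsto_of_dense_of_eventually_lipschitzWith {ι X E : Type*} [PseudoMetricSpace X]
    [PseudoMetricSpace E] {l : Filter ι} {F : ι → X → E} {K : ℝ≥0}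
    (hF : ∀ᶠ i in l, LipschitzWith K (F i)) {s : Set X} (hs : Dense s) {c : E}
    (hc : ∀ y ∈ s, Tendsto (F · y) l (𝓝 c)) (x : X) : Tendsto (F · x) l (𝓝 c) := by
  rw [Metric.tendsto_nhds]
  intro ε hε
  obtain ⟨y, hy, hxy⟩ := hs.exists_dist_lt x (show 0 < ε / (2 * (K + 1)) by positivity)
  filter_upwards [hF, Metric.tendsto_nhds.1 (hc y hy) (ε / 2) (half_pos hε)] with i hi hyi
  have hKxy : K * dist x y < ε / 2 := calc
    K * dist x y ≤ (K + 1) * dist x y := by gcongr; linarith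
    _ < (K + 1) * (ε / (2 * (K + 1))) := by gcongr
    _ = ε / 2 := by field_simp
  calc dist (F i x) c ≤ dist (F i x) (F i y) + dist (F i y) c := dist_triangle _ _ _
    _ ≤ K * dist x y + dist (F i y) c := by gcongr; exact hi.dist_le_mul x y
    _ < ε := by linarith

section UnitaryFlow

variable {H : Type*} [NormedAddCommGroup H] [NormedSpace ℂ H] {U : ℝ → H →L[ℂ] H}

lemma intervalIntegrable_smul_flow (hcont : ∀ x, Continuous fun s => U s x) {g G : ℝ → ℝ}
    {a b : ℝ} (hg : IntervalIntegrable g volume a b) (hG : ContinuousOn G (uIcc a b)) (x : H) :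
    IntervalIntegrable (fun t => g t • U (G t) x) volume a b :=
  hg.smul_continuousOn ((hcont x).comp_continuousOn hG)

lemma norm_integral_smul_flow_le (hiso : ∀ s x, ‖U s x‖ = ‖x‖) {g G : ℝ → ℝ} {a b M : ℝ}
    (hM : ∀ t ∈ uIoc a b, |g t| ≤ M) (x : H) :
    ‖∫ t in a..b, g t • U (G t) x‖ ≤ M * ‖x‖ * |b - a| :=
  intervalIntegral.norm_integral_le_of_norm_le_const fun t ht => by
    rw [norm_smul, hiso, Real.norm_eq_abs]
    exact mul_le_mul_of_nonneg_right (hM t ht) (norm_nonneg x)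

lemma I_smul_integral_smul_flow_eq_sub [CompleteSpace H]
    (hcont : ∀ x, Continuous fun s => U s x) {w v : H}
    (hw : ∀ s, HasDerivAt (fun r => U r w) (Complex.I • U s v) s) {g G : ℝ → ℝ}
    {a b : ℝ} (hab : a ≤ b) {C : Set ℝ} (hC : C.Countable) (hg : IntervalIntegrable g volume a b)
    (hGc : ContinuousOn G (Icc a b)) (hGd : ∀ t ∈ Ioo a b \ C, HasDerivAt G (g t) t) :
    Complex.I • ∫ t in a..b, g t • U (G t) v = U (G b) w - U (G a) w := by
  rw [← intervalIntegral.integral_smul]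
  refine integral_eq_of_hasDerivAt_off_countable_of_le (fun t => U (G t) w) _ hab hC
    ((hcont w).comp_continuousOn hGc) (fun t ht => ?_) ?_
  · rw [smul_comm]
    exact (hw (G t)).scomp t (hGd t ht)
  · exact (intervalIntegrable_smul_flow hcont hg (by rwa [uIcc_of_le hab]) v).smul Complex.I

lemma norm_integral_smul_flow_le_two_mul [CompleteSpace H]
    (hcont : ∀ x, Continuous fun s => U s x) (hiso : ∀ s x, ‖U s x‖ = ‖x‖) {w v : H}
    (hw : ∀ s, HasDerivAt (fun r => U r w) (Complex.I • U s v) s) {g G : ℝ → ℝ}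
    {a b : ℝ} (hab : a ≤ b) {C : Set ℝ} (hC : C.Countable) (hg : IntervalIntegrable g volume a b)
    (hGc : ContinuousOn G (Icc a b)) (hGd : ∀ t ∈ Ioo a b \ C, HasDerivAt G (g t) t) :
    ‖∫ t in a..b, g t • U (G t) v‖ ≤ 2 * ‖w‖ := calc
  ‖∫ t in a..b, g t • U (G t) v‖ = ‖Complex.I • ∫ t in a..b, g t • U (G t) v‖ := by
    rw [norm_smul, Complex.norm_I, one_mul]
  _ = ‖U (G b) w - U (G a) w‖ := by
    rw [I_smul_integral_smul_flow_eq_sub hcont hw hab hC hg hGc hGd]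
  _ ≤ ‖U (G b) w‖ + ‖U (G a) w‖ := norm_sub_le _ _
  _ = 2 * ‖w‖ := by rw [hiso, hiso]; ring

variable (U) in
noncomputable def flowAverage (g G : ℝ → ℝ) (T : ℝ) (x : H) : H :=
  (1 / T : ℝ) • ∫ t in (0 : ℝ)..T, g t • U (G t) x

lemma lipschitzWith_flowAverage (hcont : ∀ x, Continuous fun s => U s x)
    (hiso : ∀ s x, ‖U s x‖ = ‖x‖) {g G : ℝ → ℝ} {T M : ℝ} (hT : 0 < T)
    (hg : IntervalIntegrable g volume 0 T) (hG : ContinuousOn G (Icc 0 T))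
    (hM : ∀ t ∈ Ioc 0 T, |g t| ≤ M) :
    LipschitzWith M.toNNReal (flowAverage U g G T) := by
  rw [← uIcc_of_le hT.le] at hG
  refine LipschitzWith.of_dist_le_mul fun x y => ?_
  have hsub : ∫ t in (0 : ℝ)..T, g t • U (G t) (x - y) =
      (∫ t in (0 : ℝ)..T, g t • U (G t) x) - ∫ t in (0 : ℝ)..T, g t • U (G t) y := by
    simp_rw [map_sub, smul_sub]
    exact intervalIntegral.integral_sub (intervalIntegrable_smul_flow hcont hg hG x)
      (intervalIntegrable_smul_flow hcont hg hG y)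
  have hbound := norm_integral_smul_flow_le hiso (G := G) (by rwa [uIoc_of_le hT.le]) (x - y)
  rw [sub_zero, abs_of_pos hT] at hbound
  rw [dist_eq_norm, dist_eq_norm, flowAverage, flowAverage, ← smul_sub, ← hsub, norm_smul,
    Real.norm_of_nonneg (by positivity)]
  calc 1 / T * ‖∫ t in (0 : ℝ)..T, g t • U (G t) (x - y)‖ ≤ 1 / T * (M * ‖x - y‖ * T) := by
        gcongr
    _ = M * ‖x - y‖ := by field_simp
    _ ≤ M.toNNReal * ‖x - y‖ := by gcongr; exact Real.le_coe_toNNReal M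

lemma norm_flowAverage_le [CompleteSpace H] (hcont : ∀ x, Continuous fun s => U s x)
    (hiso : ∀ s x, ‖U s x‖ = ‖x‖) {w v : H}
    (hw : ∀ s, HasDerivAt (fun r => U r w) (Complex.I • U s v) s) {g G : ℝ → ℝ} {T : ℝ}
    (hT : 0 < T) {C : Set ℝ} (hC : C.Countable) (hg : IntervalIntegrable g volume 0 T)
    (hGc : ContinuousOn G (Icc 0 T)) (hGd : ∀ t ∈ Ioo 0 T \ C, HasDerivAt G (g t) t) :
    ‖flowAverage U g G T v‖ ≤ 2 * ‖w‖ * T⁻¹ := by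
  rw [flowAverage, norm_smul, one_div, Real.norm_of_nonneg (inv_nonneg.2 hT.le), mul_comm]
  gcongr
  exact norm_integral_smul_flow_le_two_mul hcont hiso hw hT.le hC hg hGc hGd

end UnitaryFlow

theorem stmt0_general {H : Type*} [NormedAddCommGroup H] [InnerProductSpace ℂ H]
    [CompleteSpace H]
    (U : ℝ → H →L[ℂ] H)
    (hiso : ∀ (s : ℝ) (x : H), ‖U s x‖ = ‖x‖)
    (hcont : ∀ x : H, Continuous fun s : ℝ => U s x)
    (D : Set H) (S : H → H)
    (hder : ∀ w ∈ D, ∀ s : ℝ, HasDerivAt (fun r : ℝ => U r w) (Complex.I • U s (S w)) s)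
    (hSdense : Dense (S '' D))
    (g : ℝ → ℝ) (hg : BoundedVariationOn g (Set.Ici 0))
    (G : ℝ → ℝ) (hG : ∀ t : ℝ, G t = ∫ s in (0:ℝ)..t, g s)
    (u : H) :
    Tendsto (fun T : ℝ => ‖(1 / T : ℝ) • ∫ t in (0:ℝ)..T, g t • U (G t) u‖)
      atTop (𝓝 0) := by
  obtain ⟨M, hM⟩ := hg.exists_abs_le
  have hC := hg.locallyBoundedVariationOn.countable_not_continuousWithinAt
  have hgi : ∀ T : ℝ, 0 ≤ T → IntervalIntegrable g volume 0 T := fun T hT =>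
    (hg.mono (by rw [uIcc_of_le hT]; exact Icc_subset_Ici_self)).intervalIntegrable
  have hGc : ∀ T : ℝ, 0 ≤ T → ContinuousOn G (Icc 0 T) := fun T hT => by
    rw [funext hG]
    simpa [uIcc_of_le hT] using
      intervalIntegral.continuousOn_primitive_interval' (hgi T hT) left_mem_uIcc
  have hGd : ∀ T : ℝ, ∀ t ∈ Ioo 0 T \ {x ∈ Ici 0 | ¬ContinuousWithinAt g (Ici 0) x},
      HasDerivAt G (g t) t := fun T t ⟨ht, htC⟩ => by
    have hgt : ContinuousWithinAt g (Ici 0) t := of_not_not fun hgt => htC ⟨ht.1.le, hgt⟩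
    rw [funext hG]
    exact hasDerivAt_integral_of_mem_Ioo (hgi T (ht.1.trans ht.2).le) ht
      (hgt.continuousAt (Ici_mem_nhds ht.1))
  refine tendsto_zero_iff_norm_tendsto_zero.1
    (tendsto_of_dense_of_eventually_lipschitzWith (F := flowAverage U g G)
      (K := M.toNNReal) ?_ hSdense ?_ u)
  · filter_upwards [eventually_gt_atTop 0] with T hT
    exact lipschitzWith_flowAverage hcont hiso hT (hgi T hT.le) (hGc T hT.le)
      fun t ht => hM t ht.1.le
  · rintro _ ⟨w, hw, rfl⟩
    refine squeeze_zero_norm' ?_ (by simpa using tendsto_inv_atTop_zero.const_mul (2 * ‖w‖))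
    filter_upwards [eventually_gt_atTop 0] with T hT
    exact norm_flowAverage_le hcont hiso (hder w hw) hT hC (hgi T hT.le) (hGc T hT.le) (hGd T)

/-- Mean ergodic lemma (Lemma 2 of the paper): for a non-negative injective
self-adjoint operator `A` on a separable complex Hilbert space `H`, with
`U s = exp(i s A^{1/2})` the generated strongly continuous unitary group
(encoded via its group, isometry, continuity, derivative-on-domain and
dense-range-of-generator properties), if `g` is of bounded variation on `[0,∞)`
and `G t = ∫₀ᵗ g`, then `(1/T) ∫₀ᵀ g t • U (G t) u dt → 0` in norm as `T → ∞`. -/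
theorem stmt0 {H : Type*} [NormedAddCommGroup H] [InnerProductSpace ℂ H]
    [CompleteSpace H] [TopologicalSpace.SeparableSpace H]
    (U : ℝ → H →L[ℂ] H)
    (hgrp : ∀ s t : ℝ, U (s + t) = (U s).comp (U t))
    (h0 : U 0 = ContinuousLinearMap.id ℂ H)
    (hiso : ∀ (s : ℝ) (x : H), ‖U s x‖ = ‖x‖)
    (hcont : ∀ x : H, Continuous fun s : ℝ => U s x)
    (D : Set H) (S : H → H)
    (hder : ∀ w ∈ D, ∀ s : ℝ, HasDerivAt (fun r : ℝ => U r w) (Complex.I • U s (S w)) s)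
    (hSdense : Dense (S '' D))
    (g : ℝ → ℝ) (hg : BoundedVariationOn g (Set.Ici 0))
    (G : ℝ → ℝ) (hG : ∀ t : ℝ, G t = ∫ s in (0:ℝ)..t, g s)
    (u : H) :
    Tendsto (fun T : ℝ => ‖(1 / T : ℝ) • ∫ t in (0:ℝ)..T, g t • U (G t) u‖)
      atTop (𝓝 0) :=
  stmt0_general U hiso hcont D S hder hSdense g hg G hG u
end

section
/- Let H be a separable complex Hilbert space, A a non-negative injective self-adjoint operator and c* > 0. For φ, ψ ∈ H, set v₁(t) = exp(i c* t A^{1/2})φ + exp(-i c* t A^{1/2})ψ and v₂(t) = i c* exp(i c* t A^{1/2})φ - i c* exp(-i c* t A^{1/2})ψ. Then c*² · lim_{T→∞} (1/T)∫₀ᵀ ‖v₁(t)‖² dt = lim_{T→∞} (1/T)∫₀ᵀ ‖v₂(t)‖² dt, and both limits equal c*² (‖φ‖² + ‖ψ‖²). -/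
/-!
Expanding the squares, `‖v₁(t)‖²` and `‖v₂(t)‖² / c*²` equal `‖φ‖² + ‖ψ‖²` plus, resp. minus,
`2 Re ⟪U(2c* t)φ, ψ⟫`, so everything reduces to the mean ergodic theorem: the time averages
`(1/T)∫₀ᵀ U t x dt` tend to `0`. They are uniformly `1`-Lipschitz in `x`, so the set of `x` for
which this holds is a closed subspace; it contains every coboundary `U s x - x`, whose average is
a difference of two integrals over intervals of length `|s|`; and the coboundaries span a dense
subspace, since a vector orthogonal to all of them is fixed by the group, hence zero.
-/

open MeasureTheory Filter Topology

section TimeAverage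

variable {E : Type*} [NormedAddCommGroup E] [NormedSpace ℝ E]

noncomputable def timeAverage (f : ℝ → E) (T : ℝ) : E := T⁻¹ • ∫ t in (0 : ℝ)..T, f t

theorem timeAverage_add {f g : ℝ → E} (hf : Continuous f) (hg : Continuous g) :
    (timeAverage fun t => f t + g t) = timeAverage f + timeAverage g := by
  funext T
  rw [Pi.add_apply, timeAverage, intervalIntegral.integral_add (hf.intervalIntegrable 0 T)
    (hg.intervalIntegrable 0 T), smul_add, timeAverage, timeAverage]

theorem timeAverage_sub {f g : ℝ → E} (hf : Continuous f) (hg : Continuous g) :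
    (timeAverage fun t => f t - g t) = timeAverage f - timeAverage g := by
  funext T
  rw [Pi.sub_apply, timeAverage, intervalIntegral.integral_sub (hf.intervalIntegrable 0 T)
    (hg.intervalIntegrable 0 T), smul_sub, timeAverage, timeAverage]

theorem timeAverage_smul {𝕜 : Type*} [NormedField 𝕜] [NormedSpace 𝕜 E] [SMulCommClass ℝ 𝕜 E]
    (c : 𝕜) (f : ℝ → E) : (timeAverage fun t => c • f t) = c • timeAverage f := by
  funext T
  rw [Pi.smul_apply, timeAverage, intervalIntegral.integral_smul, smul_comm, timeAverage]

theorem timeAverage_const [CompleteSpace E] (a : E) {T : ℝ} (hT : T ≠ 0) :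
    timeAverage (fun _ => a) T = a := by
  rw [timeAverage, intervalIntegral.integral_const, sub_zero, smul_smul, inv_mul_cancel₀ hT,
    one_smul]

theorem norm_timeAverage_le {f : ℝ → E} {C : ℝ} (hf : ∀ t, ‖f t‖ ≤ C) (T : ℝ) :
    ‖timeAverage f T‖ ≤ C := by
  rcases eq_or_ne T 0 with rfl | hT
  · simpa [timeAverage] using (norm_nonneg _).trans (hf 0)
  calc ‖timeAverage f T‖ ≤ |T|⁻¹ * (C * |T - 0|) := by
        rw [timeAverage, norm_smul, norm_inv, Real.norm_eq_abs]
        gcongr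
        exact intervalIntegral.norm_integral_le_of_norm_le_const fun t _ => hf t
    _ = C := by rw [sub_zero]; field_simp

theorem tendsto_timeAverage_zero_of_norm_integral_le {f : ℝ → E} {M : ℝ}
    (hf : ∀ T, ‖∫ t in (0 : ℝ)..T, f t‖ ≤ M) :
    Tendsto (timeAverage f) atTop (𝓝 0) :=
  tendsto_inv_atTop_zero.zero_smul_isBoundedUnder_le (isBoundedUnder_of ⟨M, hf⟩)

theorem tendsto_timeAverage_comp_add_sub {f : ℝ → E} {C : ℝ} (hf : Continuous f)
    (hC : ∀ t, ‖f t‖ ≤ C) (s : ℝ) :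
    Tendsto (timeAverage fun t => f (t + s) - f t) atTop (𝓝 0) := by
  refine tendsto_timeAverage_zero_of_norm_integral_le (M := C * |s| + C * |s|) fun T => ?_
  have hI : ∀ a b, IntervalIntegrable f volume a b := hf.intervalIntegrable
  -- shifting the first integral leaves only two boundary pieces of length `|s|`
  have hshift : ∫ t in (0 : ℝ)..T, (f (t + s) - f t)
      = (∫ t in s..0, f t) - ∫ t in (T + s)..T, f t := by
    rw [intervalIntegral.integral_sub
      ((by fun_prop : Continuous fun t => f (t + s)).intervalIntegrable 0 T) (hI 0 T), intervalIntegral.integral_comp_add_right, zero_add,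
      intervalIntegral.integral_interval_sub_interval_comm (hI _ _) (hI _ _) (hI _ _)]
  have hpiece : ∀ a b, |b - a| = |s| → ‖∫ t in a..b, f t‖ ≤ C * |s| := fun a b hab =>
    hab ▸ intervalIntegral.norm_integral_le_of_norm_le_const fun t _ => hC t
  rw [hshift]
  exact (norm_sub_le _ _).trans (add_le_add (hpiece _ _ (by simp [abs_neg]))
    (hpiece _ _ (by rw [abs_sub_comm]; simp)))

theorem Filter.Tendsto.timeAverage_comp_mul_left {f : ℝ → E} {l : E}
    (h : Tendsto (timeAverage f) atTop (𝓝 l)) {c : ℝ} (hc : 0 < c) :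
    Tendsto (timeAverage fun t => f (c * t)) atTop (𝓝 l) := by
  have hrescale : (timeAverage fun t => f (c * t)) = fun T => timeAverage f (c * T) := by
    funext T
    rw [timeAverage, intervalIntegral.integral_comp_mul_left _ hc.ne', mul_zero, smul_smul,
      ← mul_inv, mul_comm, timeAverage]
  rw [hrescale]
  exact h.comp (tendsto_id.const_mul_atTop hc)

theorem Filter.Tendsto.timeAverage_const_add_smul [CompleteSpace E] {f : ℝ → E} {l : E}
    (h : Tendsto (timeAverage f) atTop (𝓝 l)) (hf : Continuous f) (a : E) (b : ℝ) :
    Tendsto (timeAverage fun t => a + b • f t) atTop (𝓝 (a + b • l)) := by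
  refine (tendsto_const_nhds.add (h.const_smul b)).congr' ?_
  filter_upwards [eventually_ne_atTop 0] with T hT
  rw [timeAverage_add continuous_const (by fun_prop), timeAverage_smul, Pi.add_apply,
    timeAverage_const a hT, Pi.smul_apply]

theorem ContinuousLinearMap.timeAverage_comp [CompleteSpace E] {F : Type*}
    [NormedAddCommGroup F] [NormedSpace ℝ F] [CompleteSpace F] (L : E →L[ℝ] F) {f : ℝ → E}
    (hf : Continuous f) : (timeAverage fun t => L (f t)) = fun T => L (timeAverage f T) := by
  funext T
  rw [timeAverage, L.intervalIntegral_comp_comm (hf.intervalIntegrable 0 T), ← map_smul,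
    timeAverage]

end TimeAverage

section UnitaryGroup

variable {H : Type*} [NormedAddCommGroup H] [InnerProductSpace ℂ H] {U : ℝ → H →L[ℂ] H}

theorem topologicalClosure_span_sub_eq_top [CompleteSpace H]
    (hadj : ∀ (s : ℝ) (x y : H), (inner ℂ (U s x) y : ℂ) = inner ℂ x (U (-s) y))
    (hfix : ∀ x : H, (∀ t : ℝ, U t x = x) → x = 0) :
    (Submodule.span ℂ {y : H | ∃ s x, U s x - x = y}).topologicalClosure = ⊤ := by
  rw [Submodule.topologicalClosure_eq_top_iff, Submodule.eq_bot_iff]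
  intro y hy
  refine hfix y fun t => ext_inner_left ℂ fun x => ?_
  have horth : inner ℂ (U (-t) x - x) y = (0 : ℂ) :=
    (Submodule.mem_orthogonal _ y).1 hy _ (Submodule.subset_span ⟨-t, x, rfl⟩)
  rwa [inner_sub_left, sub_eq_zero, hadj, neg_neg] at horth

theorem lipschitzWith_timeAverage_apply (hiso : ∀ (s : ℝ) (x : H), ‖U s x‖ = ‖x‖)
    (hcont : ∀ x : H, Continuous fun s : ℝ => U s x) (T : ℝ) :
    LipschitzWith 1 fun x => timeAverage (fun t => U t x) T := by
  refine LipschitzWith.of_dist_le_mul fun x y => ?_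
  have hsub : (timeAverage fun t => U t (x - y))
      = timeAverage (fun t => U t x) - timeAverage (fun t => U t y) := by
    simp only [map_sub]
    exact timeAverage_sub (hcont x) (hcont y)
  rw [NNReal.coe_one, one_mul, dist_eq_norm, dist_eq_norm, ← Pi.sub_apply, ← hsub]
  exact norm_timeAverage_le (fun t => (hiso t _).le) T

theorem tendsto_timeAverage_apply_zero [CompleteSpace H]
    (hgrp : ∀ s t : ℝ, U (s + t) = (U s).comp (U t))
    (hiso : ∀ (s : ℝ) (x : H), ‖U s x‖ = ‖x‖)
    (hadj : ∀ (s : ℝ) (x y : H), (inner ℂ (U s x) y : ℂ) = inner ℂ x (U (-s) y))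
    (hcont : ∀ x : H, Continuous fun s : ℝ => U s x)
    (hfix : ∀ x : H, (∀ t : ℝ, U t x = x) → x = 0) (x : H) :
    Tendsto (timeAverage fun t => U t x) atTop (𝓝 0) := by
  let nullAverage : Submodule ℂ H :=
    { carrier := {x | Tendsto (timeAverage fun t => U t x) atTop (𝓝 0)}
      add_mem' := fun {x y} hx hy => by
        change Tendsto (timeAverage fun t => U t (x + y)) atTop (𝓝 0)
        simp only [map_add, timeAverage_add (hcont x) (hcont y)]
        rw [← add_zero (0 : H)]
        exact hx.add hy
      zero_mem' := by
        have hzero : (timeAverage fun t => U t 0) = 0 := by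
          funext T
          simp [timeAverage]
        change Tendsto (timeAverage fun t => U t 0) atTop (𝓝 0)
        rw [hzero]
        exact tendsto_const_nhds
      smul_mem' := fun c x hx => by
        change Tendsto (timeAverage fun t => U t (c • x)) atTop (𝓝 0)
        simp only [map_smul, timeAverage_smul]
        rw [← smul_zero c]
        exact hx.const_smul c }
  have hclosed : IsClosed (nullAverage : Set H) :=
    ((LipschitzWith.uniformEquicontinuous _ 1 (lipschitzWith_timeAverage_apply hiso hcont)
      ).equicontinuous.isClosed_setOfPred_tendsto continuous_const)
  have hspan : Submodule.span ℂ {y : H | ∃ s x, U s x - x = y} ≤ nullAverage := by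
    rw [Submodule.span_le]
    rintro _ ⟨s, x, rfl⟩
    have hcob : (fun t => U t (U s x - x)) = fun t => U (t + s) x - U t x := by
      funext t; rw [map_sub, hgrp]; rfl
    change Tendsto (timeAverage fun t => U t (U s x - x)) atTop (𝓝 0)
    rw [hcob]
    exact tendsto_timeAverage_comp_add_sub (hcont x) (fun t => (hiso t x).le) s
  have htop := Submodule.topologicalClosure_minimal _ hspan hclosed
  rw [topologicalClosure_span_sub_eq_top hadj hfix, top_le_iff] at htop
  have hx : x ∈ nullAverage := htop ▸ Submodule.mem_top
  exact hx

theorem inner_apply_apply_neg (hgrp : ∀ s t : ℝ, U (s + t) = (U s).comp (U t))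
    (hadj : ∀ (s : ℝ) (x y : H), (inner ℂ (U s x) y : ℂ) = inner ℂ x (U (-s) y))
    (a : ℝ) (x y : H) : inner ℂ (U a x) (U (-a) y) = (inner ℂ (U (2 * a) x) y : ℂ) := by
  rw [hadj, hadj (2 * a), show -(2 * a) = -a + -a by ring, hgrp]
  rfl

theorem norm_apply_add_apply_neg_sq (hgrp : ∀ s t : ℝ, U (s + t) = (U s).comp (U t))
    (hiso : ∀ (s : ℝ) (x : H), ‖U s x‖ = ‖x‖)
    (hadj : ∀ (s : ℝ) (x y : H), (inner ℂ (U s x) y : ℂ) = inner ℂ x (U (-s) y))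
    (a : ℝ) (x y : H) :
    ‖U a x + U (-a) y‖ ^ 2 = ‖x‖ ^ 2 + ‖y‖ ^ 2 + 2 * RCLike.re (inner ℂ (U (2 * a) x) y) := by
  rw [norm_add_sq (𝕜 := ℂ), hiso, hiso, inner_apply_apply_neg hgrp hadj]
  ring

theorem norm_apply_sub_apply_neg_sq (hgrp : ∀ s t : ℝ, U (s + t) = (U s).comp (U t))
    (hiso : ∀ (s : ℝ) (x : H), ‖U s x‖ = ‖x‖)
    (hadj : ∀ (s : ℝ) (x y : H), (inner ℂ (U s x) y : ℂ) = inner ℂ x (U (-s) y))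
    (a : ℝ) (x y : H) :
    ‖U a x - U (-a) y‖ ^ 2 = ‖x‖ ^ 2 + ‖y‖ ^ 2 - 2 * RCLike.re (inner ℂ (U (2 * a) x) y) := by
  rw [norm_sub_sq (𝕜 := ℂ), hiso, hiso, inner_apply_apply_neg hgrp hadj]
  ring

theorem tendsto_timeAverage_re_inner_apply_zero [CompleteSpace H]
    (hgrp : ∀ s t : ℝ, U (s + t) = (U s).comp (U t))
    (hiso : ∀ (s : ℝ) (x : H), ‖U s x‖ = ‖x‖)
    (hadj : ∀ (s : ℝ) (x y : H), (inner ℂ (U s x) y : ℂ) = inner ℂ x (U (-s) y))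
    (hcont : ∀ x : H, Continuous fun s : ℝ => U s x)
    (hfix : ∀ x : H, (∀ t : ℝ, U t x = x) → x = 0) (x y : H) :
    Tendsto (timeAverage fun t => RCLike.re (inner ℂ (U t x) y)) atTop (𝓝 0) := by
  let L : H →L[ℝ] ℝ := RCLike.reCLM.comp ((innerSL ℂ y).restrictScalars ℝ)
  have hL : ∀ z, RCLike.re (inner ℂ z y) = L z := fun z => inner_re_symm z y
  simp only [hL, L.timeAverage_comp (hcont x)]
  rw [← map_zero L]
  exact (L.continuous.tendsto 0).comp (tendsto_timeAverage_apply_zero hgrp hiso hadj hcont hfix x)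

end UnitaryGroup

theorem stmt4_general {H : Type*} [NormedAddCommGroup H] [InnerProductSpace ℂ H]
    [CompleteSpace H]
    (U : ℝ → H →L[ℂ] H)
    (hgrp : ∀ s t : ℝ, U (s + t) = (U s).comp (U t))
    (hiso : ∀ (s : ℝ) (x : H), ‖U s x‖ = ‖x‖)
    (hadj : ∀ (s : ℝ) (x y : H), (inner ℂ (U s x) y : ℂ) = inner ℂ x (U (-s) y))
    (hcont : ∀ x : H, Continuous fun s : ℝ => U s x)
    (hfix : ∀ x : H, (∀ t : ℝ, U t x = x) → x = 0)
    (cs : ℝ) (hcs : 0 < cs) (φ ψ : H) :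
    Tendsto (fun T : ℝ =>
        (1 / T) * ∫ t in (0:ℝ)..T, ‖U (cs * t) φ + U (-(cs * t)) ψ‖ ^ 2)
      atTop (𝓝 (‖φ‖ ^ 2 + ‖ψ‖ ^ 2)) ∧
    Tendsto (fun T : ℝ =>
        (1 / T) * ∫ t in (0:ℝ)..T,
          ‖(Complex.I * cs) • U (cs * t) φ - (Complex.I * cs) • U (-(cs * t)) ψ‖ ^ 2)
      atTop (𝓝 (cs ^ 2 * (‖φ‖ ^ 2 + ‖ψ‖ ^ 2))) := by
  set g : ℝ → ℝ := fun t => RCLike.re (inner ℂ (U (2 * cs * t) φ) ψ) with hg_def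
  have hg_cont : Continuous g := by fun_prop
  have hg : Tendsto (timeAverage g) atTop (𝓝 0) :=
    (tendsto_timeAverage_re_inner_apply_zero hgrp hiso hadj hcont hfix φ ψ
      ).timeAverage_comp_mul_left (by positivity)
  have hnorm : ‖Complex.I * cs‖ ^ 2 = cs ^ 2 := by simp
  constructor
  · convert hg.timeAverage_const_add_smul hg_cont (‖φ‖ ^ 2 + ‖ψ‖ ^ 2) 2 using 2 with T
    · simp only [timeAverage, one_div, smul_eq_mul, norm_apply_add_apply_neg_sq hgrp hiso hadj,
        hg_def, mul_assoc]
    · simp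
  · convert hg.timeAverage_const_add_smul hg_cont (cs ^ 2 * (‖φ‖ ^ 2 + ‖ψ‖ ^ 2)) (-(2 * cs ^ 2))
      using 2 with T
    · simp only [timeAverage, one_div, smul_eq_mul, ← smul_sub, norm_smul, mul_pow, hnorm,
        norm_apply_sub_apply_neg_sq hgrp hiso hadj, hg_def, mul_assoc]
      congr 2 with t
      ring
    · simp

/-- For the strongly continuous unitary group `U s = exp(i s A^{1/2})` generated by
`A^{1/2}`, with `A` non-negative injective self-adjoint on a separable complex Hilbert
space (injectivity encoded by: the only common fixed vector of the group is `0`),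
`c* > 0`, `v₁(t) = U(c* t)φ + U(-(c* t))ψ` and `v₂(t) = i c* U(c* t)φ - i c* U(-(c* t))ψ`,
the time averages of `‖v₁‖²` and `‖v₂‖²` converge, `c*²·lim (1/T)∫₀ᵀ‖v₁‖² = lim (1/T)∫₀ᵀ‖v₂‖²`,
and both limits equal `c*²(‖φ‖² + ‖ψ‖²)`. -/
theorem stmt4 {H : Type*} [NormedAddCommGroup H] [InnerProductSpace ℂ H]
    [CompleteSpace H] [TopologicalSpace.SeparableSpace H]
    (U : ℝ → H →L[ℂ] H)
    (hgrp : ∀ s t : ℝ, U (s + t) = (U s).comp (U t))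
    (h0 : U 0 = ContinuousLinearMap.id ℂ H)
    (hiso : ∀ (s : ℝ) (x : H), ‖U s x‖ = ‖x‖)
    (hadj : ∀ (s : ℝ) (x y : H), (inner ℂ (U s x) y : ℂ) = inner ℂ x (U (-s) y))
    (hcont : ∀ x : H, Continuous fun s : ℝ => U s x)
    (hfix : ∀ x : H, (∀ t : ℝ, U t x = x) → x = 0)
    (cs : ℝ) (hcs : 0 < cs) (φ ψ : H) :
    Tendsto (fun T : ℝ =>
        (1 / T) * ∫ t in (0:ℝ)..T, ‖U (cs * t) φ + U (-(cs * t)) ψ‖ ^ 2)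
      atTop (𝓝 (‖φ‖ ^ 2 + ‖ψ‖ ^ 2)) ∧
    Tendsto (fun T : ℝ =>
        (1 / T) * ∫ t in (0:ℝ)..T,
          ‖(Complex.I * cs) • U (cs * t) φ - (Complex.I * cs) • U (-(cs * t)) ψ‖ ^ 2)
      atTop (𝓝 (cs ^ 2 * (‖φ‖ ^ 2 + ‖ψ‖ ^ 2))) :=
  stmt4_general U hgrp hiso hadj hcont hfix cs hcs φ ψ
end

section
/- Let H be a complex Hilbert space, A a non-negative injective self-adjoint operator, c : [0,∞) → ℝ of bounded variation with c₀ := inf_{t≥0} c(t) > 0, and b ∈ L¹(0,∞). Suppose λ > 0 and u_λ : [0,∞) → D(A) is a C² solution (with values in the range of the spectral projection E([0,λ)) of A) of u_λ'' + c(t)² A u_λ + b(t) u_λ' = 0 with c continuously differentiable. Define F_λ(t) = (1/2)‖u_λ'(t)‖² + (1/2)c(t)²‖A^{1/2}u_λ(t)‖². Then for all t ≥ S ≥ 0: F_λ(t) ≥ F_λ(S) · exp( -2‖b‖_{L¹(0,∞)} - (2/c₀)·Var(c;[0,∞)) ). -/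
/-!
Along a solution `F' = -b ‖u'‖² + c c' ‖A^{1/2} u‖²`: the terms `±c² Re⟪A u, u'⟫` cancel. Since
`c ≥ c₀`, both terms are at least `-(2|b| + (2/c₀)|c'|) F`, and Gronwall's inequality gives
`F t ≥ F s · exp (-∫ₛᵗ (2|b| + (2/c₀)|c'|))`. Finally `∫ₛᵗ |c'| ≤ Var(c; [s, t])`, because
`x ↦ ∫ₛˣ |c'| - Var(c; [s, x])` is continuous, vanishes at `s`, and has right Dini derivative at
most `|c'| - |c'| = 0`.
-/

open MeasureTheory Filter Topology Set

theorem continuousOn_variationOnFromTo {α E : Type*} [LinearOrder α] [TopologicalSpace α]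
    [OrderTopology α] [PseudoMetricSpace E] {f : α → E} {s : Set α} {a : α}
    (hf : LocallyBoundedVariationOn f s) (hfc : ContinuousOn f s) (ha : a ∈ s) :
    ContinuousOn (variationOnFromTo f s a) s := by
  intro x hx
  have hleft := variationOnFromTo.tendsto_left ha hx hf ((hfc x hx).mono inter_subset_left)
  have hright := variationOnFromTo.tendsto_right ha hx hf ((hfc x hx).mono inter_subset_left)
  rw [dist_self, sub_zero] at hleft
  rw [dist_self, add_zero] at hright
  have hs : s ∩ Iio x ∪ s ∩ Ioi x = s \ {x} := by
    rw [← inter_union_distrib_left, Iio_union_Ioi, sdiff_eq]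
  rw [← continuousWithinAt_sdiff_self, ← hs]
  exact ContinuousWithinAt.union hleft hright

theorem integral_abs_deriv_le_eVariationOn {c : ℝ → ℝ} (hc : ContDiff ℝ 1 c) {a b : ℝ}
    (hab : a ≤ b) (hbv : BoundedVariationOn c (Icc a b)) :
    ∫ x in a..b, |deriv c x| ≤ (eVariationOn c (Icc a b)).toReal := by
  have hloc := hbv.locallyBoundedVariationOn
  have ha : a ∈ Icc a b := left_mem_Icc.2 hab
  set V := variationOnFromTo c (Icc a b) a
  set φ := fun x => ∫ y in a..x, |deriv c y|
  have hcd : ∀ x, HasDerivAt c (deriv c x) x := fun x =>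
    (hc.differentiable one_ne_zero x).hasDerivAt
  have hφ : ∀ x, HasDerivAt φ |deriv c x| x := fun x =>
    ((hc.continuous_deriv le_rfl).abs.integral_hasStrictDerivAt a x).hasDerivAt
  have hφV : ∀ x ∈ Icc a b, φ x - V x ≤ 0 := by
    refine image_le_of_liminf_slope_right_le_deriv_boundary (B := 0) (B' := 0) ?_ ?_
      continuousOn_const (fun _ _ => hasDerivWithinAt_const _ _ _) ?_
    · exact (continuous_iff_continuousAt.2 fun x => (hφ x).continuousAt).continuousOn.sub
        (continuousOn_variationOnFromTo hloc hc.continuous.continuousOn ha)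
    · simp [φ, V, variationOnFromTo.self]
    intro x hx r hr
    have hlim : Tendsto (fun z => slope φ x z - |slope c x z|) (𝓝[>] x) (𝓝 0) := by
      simpa using ((hφ x).tendsto_slope.sub (hcd x).tendsto_slope.abs).mono_left
        (nhdsGT_le_nhdsNE x)
    refine ((hlim.eventually (gt_mem_nhds hr)).and (Ioc_mem_nhdsGT hx.2)).frequently.mono ?_
    rintro z ⟨hzr, hzx, hzb⟩
    have hvar : |c z - c x| ≤ V z - V x :=
      variationOnFromTo.abs_sub_le_sub_of_le hloc ha ⟨hx.1, hx.2.le⟩ ⟨hx.1.trans hzx.le, hzb⟩ hzx.le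
    have hzx' : 0 < z - x := sub_pos.2 hzx
    simp only [slope_def_field, abs_div, abs_of_pos hzx'] at hzr ⊢
    calc (φ z - V z - (φ x - V x)) / (z - x)
        ≤ (φ z - φ x) / (z - x) - |c z - c x| / (z - x) := by
          rw [← sub_div]; exact div_le_div_of_nonneg_right (by linarith) hzx'.le
      _ < r := hzr
  have hVb : V b = (eVariationOn c (Icc a b)).toReal :=
    (variationOnFromTo.eq_of_le _ _ hab).trans (by rw [inter_self])
  have := hφV b (right_mem_Icc.2 hab)
  linarith

theorem mul_exp_neg_integral_le_of_hasDerivAt {F F' k : ℝ → ℝ} {a b : ℝ} (hab : a ≤ b)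
    (hF : ContinuousOn F (Icc a b)) (hF' : ∀ x ∈ Ioo a b, HasDerivAt F (F' x) x)
    (hF0 : ∀ x ∈ Icc a b, 0 ≤ F x) (hk : IntegrableOn k (Icc a b))
    (hk0 : ∀ x ∈ Ioo a b, 0 ≤ k x) (hF'k : ∀ x ∈ Ioo a b, -(k x * F x) ≤ F' x) :
    F a * Real.exp (-∫ x in a..b, k x) ≤ F b := by
  -- `F + δ` instead of `F` keeps the logarithm finite where `F` vanishes
  refine le_of_forall_pos_le_add fun δ hδ => ?_
  have hP : ∀ x ∈ Icc a b, 0 < F x + δ := fun x hx => by linarith [hF0 x hx]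
  have hlog : -∫ x in a..b, k x ≤ Real.log (F b + δ) - Real.log (F a + δ) := by
    rw [← intervalIntegral.integral_neg]
    refine intervalIntegral.integral_le_sub_of_hasDeriv_right_of_le hab
      ((hF.add continuousOn_const).log fun x hx => (hP x hx).ne')
      (fun x hx => (((hF' x hx).add_const δ).log (hP x (Ioo_subset_Icc_self hx)).ne').hasDerivWithinAt)
      hk.neg fun x hx => ?_
    rw [le_div_iff₀ (hP x (Ioo_subset_Icc_self hx))]
    nlinarith [hF'k x hx, hk0 x hx]
  have ha := hP a (left_mem_Icc.2 hab)
  calc F a * Real.exp (-∫ x in a..b, k x)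
      ≤ (F a + δ) * Real.exp (Real.log (F b + δ) - Real.log (F a + δ)) := by
        gcongr
        linarith
      _ = F b + δ := by
        rw [Real.exp_sub, Real.exp_log ha, Real.exp_log (hP b (right_mem_Icc.2 hab))]
        field_simp

theorem neg_mul_energy_le_deriv {w v β γ γ' γ₀ : ℝ} (hγ₀ : 0 < γ₀) (hγ : γ₀ ≤ γ) :
    -((2 * |β| + 2 / γ₀ * |γ'|) * (1 / 2 * w ^ 2 + 1 / 2 * γ ^ 2 * v ^ 2))
      ≤ -β * w ^ 2 + γ * γ' * v ^ 2 := by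
  have hfric : -(|β| * w ^ 2) ≤ -β * w ^ 2 := by nlinarith [le_abs_self β, sq_nonneg w]
  have hγ' : -(|γ'| * γ) ≤ γ * γ' := by nlinarith [neg_abs_le γ', abs_nonneg γ']
  have hγγ : γ ≤ γ ^ 2 / γ₀ := by rw [le_div_iff₀ hγ₀]; nlinarith
  have hcoef : -(|γ'| * (γ ^ 2 / γ₀) * v ^ 2) ≤ γ * γ' * v ^ 2 := by
    have := mul_le_mul_of_nonneg_left hγγ (abs_nonneg γ')
    nlinarith [sq_nonneg v]
  have h1 : 0 ≤ |β| * γ ^ 2 * v ^ 2 := by positivity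
  have h2 : 0 ≤ |γ'| / γ₀ * w ^ 2 := by positivity
  have : -((2 * |β| + 2 / γ₀ * |γ'|) * (1 / 2 * w ^ 2 + 1 / 2 * γ ^ 2 * v ^ 2)) =
      -(|β| * w ^ 2) - (|γ'| * (γ ^ 2 / γ₀) * v ^ 2) - |β| * γ ^ 2 * v ^ 2 - |γ'| / γ₀ * w ^ 2 := by
    ring
  linarith

section Energy

variable {H : Type*} [NormedAddCommGroup H]

noncomputable def energy (c : ℝ → ℝ) (S : H → H) (u u' : ℝ → H) (t : ℝ) : ℝ :=
  1 / 2 * ‖u' t‖ ^ 2 + 1 / 2 * c t ^ 2 * ‖S (u t)‖ ^ 2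

theorem energy_nonneg (c : ℝ → ℝ) (S : H → H) (u u' : ℝ → H) (t : ℝ) :
    0 ≤ energy c S u u' t := by
  unfold energy; positivity

variable [InnerProductSpace ℂ H]

theorem hasDerivAt_energy {A S : H → H} {b c : ℝ → ℝ} {u u' u'' : ℝ → H} {c' t : ℝ}
    (hc : HasDerivAt c c' t) (hu' : HasDerivAt u' (u'' t) t)
    (hSu : HasDerivAt (fun r => S (u r)) (S (u' t)) t)
    (hAS : inner ℂ (S (u t)) (S (u' t)) = inner ℂ (A (u t)) (u' t))
    (heq : u'' t + c t ^ 2 • A (u t) + b t • u' t = 0) :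
    HasDerivAt (energy c S u u') (-b t * ‖u' t‖ ^ 2 + c t * c' * ‖S (u t)‖ ^ 2) t := by
  let _ : InnerProductSpace ℝ H := InnerProductSpace.complexToReal
  have hu'' : u'' t = -(c t ^ 2 • A (u t)) - b t • u' t := by
    rw [← sub_eq_zero, ← heq]; abel
  refine (((hu'.norm_sq).const_mul (1 / 2)).fun_add
    (((hc.fun_pow 2).const_mul (1 / 2)).fun_mul hSu.norm_sq)).congr_deriv ?_
  have hAS' : inner ℝ (S (u t)) (S (u' t)) = inner ℝ (A (u t)) (u' t) := by
    rw [real_inner_eq_re_inner ℂ, real_inner_eq_re_inner ℂ, hAS]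
  rw [hAS', hu'', inner_sub_right, inner_neg_right, real_inner_smul_right, real_inner_smul_right,
    real_inner_self_eq_norm_sq, real_inner_comm (A (u t))]
  ring

end Energy

theorem intervalIntegrable_of_integrableOn_Ioi {E : Type*} [NormedAddCommGroup E] {f : ℝ → E}
    {a s t : ℝ} (hf : IntegrableOn f (Ioi a)) (has : a ≤ s) (hst : s ≤ t) :
    IntervalIntegrable f volume s t :=
  (intervalIntegrable_iff_integrableOn_Ioc_of_le hst).2 (hf.mono_set fun _ hx => has.trans_lt hx.1)

section Rate

variable {b c : ℝ → ℝ} {c₀ s t : ℝ}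

theorem intervalIntegrable_rate (hc : ContDiff ℝ 1 c) (hb : IntegrableOn b (Ioi 0)) (hs : 0 ≤ s)
    (hst : s ≤ t) :
    IntervalIntegrable (fun x => 2 * |b x| + 2 / c₀ * |deriv c x|) volume s t :=
  ((intervalIntegrable_of_integrableOn_Ioi hb hs hst).abs.const_mul 2).add
    (((hc.continuous_deriv le_rfl).abs.intervalIntegrable s t).const_mul _)

theorem integral_rate_le (hc : ContDiff ℝ 1 c) (hbv : BoundedVariationOn c (Ici 0)) (hc₀ : 0 ≤ c₀)
    (hb : IntegrableOn b (Ioi 0)) (hs : 0 ≤ s) (hst : s ≤ t) :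
    ∫ x in s..t, (2 * |b x| + 2 / c₀ * |deriv c x|)
      ≤ 2 * (∫ σ in Ioi 0, |b σ|) + 2 / c₀ * (eVariationOn c (Ici 0)).toReal := by
  have hIcc : Icc s t ⊆ Ici 0 := fun x hx => hs.trans hx.1
  have hb_le : ∫ x in s..t, |b x| ≤ ∫ σ in Ioi 0, |b σ| := by
    rw [intervalIntegral.integral_of_le hst]
    refine setIntegral_mono_set hb.abs (ae_of_all _ fun x => abs_nonneg _) ?_
    exact LE.le.eventuallyLE (show Ioc s t ⊆ Ioi 0 from fun x hx => hs.trans_lt hx.1)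
  have hc_le : ∫ x in s..t, |deriv c x| ≤ (eVariationOn c (Ici 0)).toReal :=
    (integral_abs_deriv_le_eVariationOn hc hst
      (ne_top_of_le_ne_top hbv (eVariationOn.mono c hIcc))).trans
      (ENNReal.toReal_mono hbv (eVariationOn.mono c hIcc))
  rw [intervalIntegral.integral_add
    ((intervalIntegrable_of_integrableOn_Ioi hb hs hst).abs.const_mul 2)
    (((hc.continuous_deriv le_rfl).abs.intervalIntegrable s t).const_mul _),
    intervalIntegral.integral_const_mul, intervalIntegral.integral_const_mul]
  gcongr

end Rate

theorem stmt12_general {H : Type*} [NormedAddCommGroup H] [InnerProductSpace ℂ H]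
    (DA DS : Set H) (A S : H → H)
    (hAS : ∀ x ∈ DA, ∀ y ∈ DS, (inner ℂ (S x) (S y) : ℂ) = inner ℂ (A x) y)
    (c : ℝ → ℝ) (hc1 : ContDiff ℝ 1 c)
    (hbv : BoundedVariationOn c (Set.Ici 0))
    (c₀ : ℝ) (hc₀ : 0 < c₀) (hcge : ∀ t : ℝ, 0 ≤ t → c₀ ≤ c t)
    (b : ℝ → ℝ) (hb : IntegrableOn b (Set.Ioi 0))
    (u u' u'' : ℝ → H)
    (hu2 : ∀ t : ℝ, HasDerivAt u' (u'' t) t)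
    (hudom : ∀ t : ℝ, u t ∈ DA) (hu'dom : ∀ t : ℝ, u' t ∈ DS)
    (hSu : ∀ t : ℝ, HasDerivAt (fun r : ℝ => S (u r)) (S (u' t)) t)
    (heq : ∀ t : ℝ, u'' t + (c t) ^ 2 • A (u t) + b t • u' t = 0) :
    ∀ s t : ℝ, 0 ≤ s → s ≤ t →
      (1 / 2) * ‖u' t‖ ^ 2 + (1 / 2) * (c t) ^ 2 * ‖S (u t)‖ ^ 2 ≥
        ((1 / 2) * ‖u' s‖ ^ 2 + (1 / 2) * (c s) ^ 2 * ‖S (u s)‖ ^ 2) *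
          Real.exp (-2 * (∫ σ in Set.Ioi (0:ℝ), |b σ|)
            - (2 / c₀) * (eVariationOn c (Set.Ici 0)).toReal) := by
  intro s t hs hst
  have hderiv : ∀ x, HasDerivAt (energy c S u u')
      (-b x * ‖u' x‖ ^ 2 + c x * deriv c x * ‖S (u x)‖ ^ 2) x := fun x =>
    hasDerivAt_energy (hc1.differentiable one_ne_zero x).hasDerivAt (hu2 x) (hSu x)
      (hAS _ (hudom x) _ (hu'dom x)) (heq x)
  calc energy c S u u' s * Real.exp (-2 * (∫ σ in Ioi 0, |b σ|)
          - 2 / c₀ * (eVariationOn c (Ici 0)).toReal)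
      ≤ energy c S u u' s * Real.exp (-∫ x in s..t, (2 * |b x| + 2 / c₀ * |deriv c x|)) := by
        gcongr
        · exact energy_nonneg c S u u' s
        linarith [integral_rate_le hc1 hbv hc₀.le hb hs hst]
    _ ≤ energy c S u u' t :=
      mul_exp_neg_integral_le_of_hasDerivAt hst
        (continuous_iff_continuousAt.2 fun x => (hderiv x).continuousAt).continuousOn
        (fun x _ => hderiv x) (fun x _ => energy_nonneg c S u u' x)
        ((intervalIntegrable_iff_integrableOn_Icc_of_le hst).1
          (intervalIntegrable_rate hc1 hb hs hst))
        (fun x _ => by positivity)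
        (fun x hx => neg_mul_energy_le_deriv hc₀ (hcge x (hs.trans hx.1.le)))

/-- Non-decay of the energy of spectrally localized solutions. Let `A` be a
non-negative injective self-adjoint operator on a complex Hilbert space, with square
root `S = A^{1/2}` satisfying `⟪S x, S y⟫ = ⟪A x, y⟫` for `x ∈ D(A)`, `y ∈ D(S)`.
Let `c` be `C¹`, of bounded variation on `[0,∞)`, with `c₀ := inf c > 0`, and
`b ∈ L¹(0,∞)`. Let `u` be a `C²` solution of `u'' + c(t)² A u + b(t) u' = 0` with
values in the range of the spectral projection `E([0,λ))` (so that
`‖A u(t)‖ ≤ √λ ‖S u(t)‖` and `S ∘ u` is differentiable with derivative `S ∘ u'`).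
Then the energy `F(t) = ½‖u'(t)‖² + ½ c(t)²‖S u(t)‖²` satisfies, for `t ≥ S ≥ 0`,
`F(t) ≥ F(S) exp(-2‖b‖_{L¹} - (2/c₀) Var(c;[0,∞)))`. -/
theorem stmt12 {H : Type*} [NormedAddCommGroup H] [InnerProductSpace ℂ H]
    [CompleteSpace H]
    (DA DS : Set H) (A S : H → H)
    (hAS : ∀ x ∈ DA, ∀ y ∈ DS, (inner ℂ (S x) (S y) : ℂ) = inner ℂ (A x) y)
    (c : ℝ → ℝ) (hc1 : ContDiff ℝ 1 c)
    (hbv : BoundedVariationOn c (Set.Ici 0))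
    (c₀ : ℝ) (hc₀ : 0 < c₀) (hcge : ∀ t : ℝ, 0 ≤ t → c₀ ≤ c t)
    (b : ℝ → ℝ) (hb : IntegrableOn b (Set.Ioi 0))
    (lam : ℝ) (hlam : 0 < lam)
    (u u' u'' : ℝ → H)
    (hu1 : ∀ t : ℝ, HasDerivAt u (u' t) t)
    (hu2 : ∀ t : ℝ, HasDerivAt u' (u'' t) t)
    (hudom : ∀ t : ℝ, u t ∈ DA) (hu'dom : ∀ t : ℝ, u' t ∈ DS)
    (hSu : ∀ t : ℝ, HasDerivAt (fun r : ℝ => S (u r)) (S (u' t)) t)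
    (heq : ∀ t : ℝ, u'' t + (c t) ^ 2 • A (u t) + b t • u' t = 0)
    (hspec : ∀ t : ℝ, ‖A (u t)‖ ≤ Real.sqrt lam * ‖S (u t)‖) :
    ∀ s t : ℝ, 0 ≤ s → s ≤ t →
      (1 / 2) * ‖u' t‖ ^ 2 + (1 / 2) * (c t) ^ 2 * ‖S (u t)‖ ^ 2 ≥
        ((1 / 2) * ‖u' s‖ ^ 2 + (1 / 2) * (c s) ^ 2 * ‖S (u s)‖ ^ 2) *
          Real.exp (-2 * (∫ σ in Set.Ioi (0:ℝ), |b σ|)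
            - (2 / c₀) * (eVariationOn c (Set.Ici 0)).toReal) :=
  stmt12_general DA DS A S hAS c hc1 hbv c₀ hc₀ hcge b hb u u' u'' hu2 hudom hu'dom hSu heq
end
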